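/- arXiv:1903.06868 — 4 statements merged into one kernel-verified Lean document; each statement's English description precedes it below -/
import Mathlib

section
/- Let κ ∈ ℤ and let m be a positive integer. Define F : ℍ → ℂ by F(z) := 𝐖_κ(2πm·Im z) · e^{2πimz}. Then for every z = x+iy ∈ ℍ one has 2i y^κ · conj( (1/2)(∂F/∂x + i ∂F/∂y)(z) ) = (2πm)^{1−κ} · W_{2−κ}(−2πm y) · e^{−2πimz}. -/
/-
Since `e^{2πimz}` is holomorphic, `∂/∂z̄` only sees the factor `𝐖_κ(2πm y)`, so that
`ξ_κ F = 2πm · y^κ · 𝐖_κ'(2πm y) · conj(e^{2πimz})`. The derivative of the tail integral `𝐖_κ`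
is minus its integrand, provided the integrand is continuous and integrable at infinity. Both
come from `W_{2-κ}(-t) = O(t^{κ-2} e^{-2t})`, obtained by dominating `s^n` by a multiple of
`e^{bs}`, which makes the integrand `O(t^{-2})`. What remains is the cancellation of the powers
of `y` and of `e^{±4πmy}`.
-/

open MeasureTheory Complex

/-- `W_κ(w) := (−2w)^{1−κ} ∫₁^∞ e^{2wt} t^{−κ} dt` (convergent for `w < 0`). -/
noncomputable def Wfun (κ : ℤ) (w : ℝ) : ℝ :=
  (-2 * w) ^ (1 - κ) * ∫ t in Set.Ioi (1 : ℝ), Real.exp (2 * w * t) * t ^ (-κ)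

/-- `𝐖_κ(w) := −∫_w^∞ W_{2−κ}(−t) t^{−κ} e^{2t} dt` (convergent for `w > 0`). -/
noncomputable def bWfun (κ : ℤ) (w : ℝ) : ℝ :=
  -∫ t in Set.Ioi w, Wfun (2 - κ) (-t) * t ^ (-κ) * Real.exp (2 * t)

open Set Filter Topology

theorem hasDerivAt_integral_Ioi {E : Type*} [NormedAddCommGroup E] [NormedSpace ℝ E]
    [CompleteSpace E] {f : ℝ → E} {a w : ℝ} (hf : IntegrableOn f (Ioi a)) (haw : a < w)
    (hfw : ContinuousAt f w) : HasDerivAt (fun u => ∫ t in Ioi u, f t) (-f w) w := by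
  have hFTC : HasDerivAt (fun u => ∫ t in a..u, f t) (f w) w :=
    intervalIntegral.integral_hasDerivAt_right
      ((intervalIntegrable_iff_integrableOn_Ioc_of_le haw.le).2 (hf.mono_set Ioc_subset_Ioi_self))
      ⟨Ioi a, Ioi_mem_nhds haw, hf.aestronglyMeasurable⟩ hfw
  refine (hFTC.const_sub (∫ t in Ioi a, f t)).congr_of_eventuallyEq ?_
  filter_upwards [eventually_ge_nhds haw] with u hu
  rw [← intervalIntegral.integral_Ioi_sub_Ioi hf hu, sub_sub_cancel]

theorem zpow_le_mul_exp (n : ℤ) {b t : ℝ} (hb : 0 < b) (ht : 1 ≤ t) :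
    t ^ n ≤ n.natAbs.factorial / b ^ n.natAbs * Real.exp (b * t) := by
  have hexp := Real.pow_div_factorial_le_exp (x := b * t) (by positivity) n.natAbs
  calc t ^ n ≤ t ^ (n.natAbs : ℤ) := zpow_le_zpow_right₀ ht Int.le_natAbs
    _ = n.natAbs.factorial / b ^ n.natAbs * ((b * t) ^ n.natAbs / n.natAbs.factorial) := by
      field_simp; rw [zpow_natCast]; ring
    _ ≤ _ := by gcongr

theorem continuousOn_exp_mul_zpow (n : ℤ) (w : ℝ) :
    ContinuousOn (fun t : ℝ => Real.exp (2 * w * t) * t ^ n) (Ioi 1) := by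
  intro t ht
  have : t ≠ 0 ∨ 0 ≤ n := Or.inl (by simp at ht; linarith)
  exact ContinuousAt.continuousWithinAt (by fun_prop (disch := assumption))

theorem exp_mul_zpow_le (n : ℤ) {b : ℝ} (hb : 0 < b) :
    ∃ C, 0 ≤ C ∧ ∀ w t : ℝ, 1 ≤ t →
      Real.exp (2 * w * t) * t ^ n ≤ C * Real.exp ((2 * w + b) * t) := by
  set C := n.natAbs.factorial / b ^ n.natAbs
  refine ⟨C, by positivity, fun w t ht => ?_⟩
  calc Real.exp (2 * w * t) * t ^ n ≤ Real.exp (2 * w * t) * (C * Real.exp (b * t)) := by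
        gcongr; exact zpow_le_mul_exp n hb ht
    _ = C * Real.exp ((2 * w + b) * t) := by rw [add_mul, Real.exp_add]; ring

theorem exp_mul_zpow_nonneg (n : ℤ) (w : ℝ) {t : ℝ} (ht : t ∈ Ioi (1 : ℝ)) :
    0 ≤ Real.exp (2 * w * t) * t ^ n := by
  have : (0 : ℝ) < t := by simp at ht; linarith
  positivity

theorem integrableOn_exp_mul_zpow (n : ℤ) {w : ℝ} (hw : w < 0) :
    IntegrableOn (fun t : ℝ => Real.exp (2 * w * t) * t ^ n) (Ioi 1) := by
  obtain ⟨C, -, hC⟩ := exp_mul_zpow_le n (neg_pos.2 hw)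
  refine ((integrableOn_exp_mul_Ioi (by linarith : 2 * w + -w < 0) 1).const_mul C).mono'
    ((continuousOn_exp_mul_zpow n w).aestronglyMeasurable measurableSet_Ioi) ?_
  filter_upwards [ae_restrict_mem measurableSet_Ioi] with t ht
  rw [Real.norm_of_nonneg (exp_mul_zpow_nonneg n w ht)]
  exact hC w t (le_of_lt ht)

theorem continuousAt_integral_exp_mul_zpow (n : ℤ) {w₀ : ℝ} (hw₀ : w₀ < 0) :
    ContinuousAt (fun w => ∫ t in Ioi (1 : ℝ), Real.exp (2 * w * t) * t ^ n) w₀ := by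
  refine continuousAt_of_dominated (bound := fun t => Real.exp (2 * (w₀ / 2) * t) * t ^ n)
    (Eventually.of_forall fun w =>
      (continuousOn_exp_mul_zpow n w).aestronglyMeasurable measurableSet_Ioi) ?_
    (integrableOn_exp_mul_zpow n (by linarith)) ?_
  · filter_upwards [eventually_lt_nhds (by linarith : w₀ < w₀ / 2)] with w hw
    filter_upwards [ae_restrict_mem measurableSet_Ioi] with t ht
    rw [Real.norm_of_nonneg (exp_mul_zpow_nonneg n w ht)]
    have : (0 : ℝ) < t := by simp at ht; linarith
    gcongr
  · exact Eventually.of_forall fun t => by fun_prop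

theorem integral_exp_mul_zpow_le (n : ℤ) {b : ℝ} (hb : 0 < b) :
    ∃ C, ∀ w ≤ -b,
      ∫ t in Ioi (1 : ℝ), Real.exp (2 * w * t) * t ^ n ≤ C * Real.exp (2 * w) / -w := by
  obtain ⟨C, hC0, hC⟩ := exp_mul_zpow_le n hb
  refine ⟨C * Real.exp b, fun w hw => ?_⟩
  have hwb : 2 * w + b < 0 := by linarith
  calc ∫ t in Ioi (1 : ℝ), Real.exp (2 * w * t) * t ^ n
      ≤ ∫ t in Ioi (1 : ℝ), C * Real.exp ((2 * w + b) * t) :=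
        setIntegral_mono_on (integrableOn_exp_mul_zpow n (by linarith))
          ((integrableOn_exp_mul_Ioi hwb 1).const_mul C) measurableSet_Ioi
          fun t ht => hC w t (le_of_lt ht)
    _ = C * Real.exp b * Real.exp (2 * w) / -(2 * w + b) := by
        rw [integral_const_mul, integral_exp_mul_Ioi hwb, mul_one, Real.exp_add, div_neg, neg_div]
        ring
    _ ≤ C * Real.exp b * Real.exp (2 * w) / -w := by
        gcongr <;> linarith

theorem continuousAt_Wfun (κ : ℤ) {w : ℝ} (hw : w < 0) : ContinuousAt (Wfun κ) w := by
  have : -2 * w ≠ 0 ∨ 0 ≤ 1 - κ := Or.inl (by linarith)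
  exact ContinuousAt.mul (by fun_prop (disch := assumption))
    (continuousAt_integral_exp_mul_zpow (-κ) hw)

theorem Wfun_nonneg (κ : ℤ) {w : ℝ} (hw : w < 0) : 0 ≤ Wfun κ w := by
  have hpow : 0 ≤ (-2 * w) ^ (1 - κ) := zpow_nonneg (by linarith) _
  exact mul_nonneg hpow
    (setIntegral_nonneg measurableSet_Ioi fun t ht => exp_mul_zpow_nonneg _ w ht)

theorem Wfun_le (κ : ℤ) {b : ℝ} (hb : 0 < b) :
    ∃ C, ∀ w ≤ -b, Wfun κ w ≤ C * (-w) ^ (-κ) * Real.exp (2 * w) := by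
  obtain ⟨C, hC⟩ := integral_exp_mul_zpow_le (-κ) hb
  refine ⟨2 ^ (1 - κ) * C, fun w hw => ?_⟩
  have hw0 : 0 < -w := by linarith
  calc Wfun κ w ≤ (-2 * w) ^ (1 - κ) * (C * Real.exp (2 * w) / -w) := by
        unfold Wfun; gcongr
        · exact zpow_nonneg (by linarith) _
        · exact hC w hw
    _ = 2 ^ (1 - κ) * C * (-w) ^ (-κ) * Real.exp (2 * w) := by
        rw [show -2 * w = 2 * -w by ring, mul_zpow, sub_eq_add_neg, zpow_add₀ hw0.ne', zpow_one]
        have : w ≠ 0 := by linarith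
        field_simp

theorem continuousAt_bWfun_integrand (κ : ℤ) {t : ℝ} (ht : 0 < t) :
    ContinuousAt (fun t : ℝ => Wfun (2 - κ) (-t) * t ^ (-κ) * Real.exp (2 * t)) t := by
  have hW : ContinuousAt (fun t : ℝ => Wfun (2 - κ) (-t)) t :=
    (continuousAt_Wfun (2 - κ) (neg_lt_zero.2 ht)).comp continuousAt_neg
  have : t ≠ 0 ∨ 0 ≤ -κ := Or.inl ht.ne'
  fun_prop (disch := assumption)

theorem integrableOn_bWfun_integrand (κ : ℤ) {a : ℝ} (ha : 0 < a) :
    IntegrableOn (fun t : ℝ => Wfun (2 - κ) (-t) * t ^ (-κ) * Real.exp (2 * t)) (Ioi a) := by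
  obtain ⟨C, hC⟩ := Wfun_le (2 - κ) ha
  refine ((integrableOn_Ioi_rpow_of_lt (by norm_num : (-2 : ℝ) < -1) ha).const_mul C).mono'
    (ContinuousOn.aestronglyMeasurable (fun t ht => ?_) measurableSet_Ioi) ?_
  · exact (continuousAt_bWfun_integrand κ (ha.trans ht)).continuousWithinAt
  filter_upwards [ae_restrict_mem measurableSet_Ioi] with t (ht : a < t)
  have ht0 : 0 < t := ha.trans ht
  rw [Real.norm_of_nonneg (by have := Wfun_nonneg (2 - κ) (neg_lt_zero.2 ht0); positivity)]
  calc Wfun (2 - κ) (-t) * t ^ (-κ) * Real.exp (2 * t)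
      ≤ C * t ^ (-(2 - κ)) * Real.exp (2 * -t) * t ^ (-κ) * Real.exp (2 * t) := by
        gcongr; simpa using hC (-t) (by linarith)
    _ = C * t ^ ((-2 : ℤ) : ℝ) := by
        rw [Real.rpow_intCast, show (-2 : ℤ) = -(2 - κ) + -κ by ring, zpow_add₀ ht0.ne',
          show 2 * -t = -(2 * t) by ring, Real.exp_neg]
        field_simp
    _ = C * t ^ (-2 : ℝ) := by norm_num

theorem hasDerivAt_bWfun (κ : ℤ) {w : ℝ} (hw : 0 < w) :
    HasDerivAt (bWfun κ) (Wfun (2 - κ) (-w) * w ^ (-κ) * Real.exp (2 * w)) w := by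
  have := (hasDerivAt_integral_Ioi (integrableOn_bWfun_integrand κ (half_pos hw))
    (half_lt_self hw) (continuousAt_bWfun_integrand κ hw)).neg
  rwa [neg_neg] at this

theorem dbar_ofReal_comp_im_mul {φ : ℝ → ℝ} {φ' : ℝ} {h F : ℂ → ℂ} {z : ℂ}
    (hF : ∀ w, F w = φ w.im * h w) (hφ : HasDerivAt φ φ' z.im) (hh : DifferentiableAt ℂ h z) :
    (1 / 2) * (fderiv ℝ F z 1 + I * fderiv ℝ F z I) = I * φ' / 2 * h z := by
  have hφim : HasFDerivAt (fun w : ℂ => (φ w.im : ℂ)) (ofRealCLM.comp (φ' • imCLM)) z :=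
    ofRealCLM.hasFDerivAt.comp z (hφ.comp_hasFDerivAt z imCLM.hasFDerivAt)
  rw [show F = (fun w : ℂ => (φ w.im : ℂ)) * h from funext hF,
    (hφim.mul (hh.hasDerivAt.hasFDerivAt.restrictScalars ℝ)).fderiv]
  simp only [one_div, add_apply, smul_apply, ContinuousLinearMap.coe_restrictScalars',
    ContinuousLinearMap.toSpanSingleton_apply, ContinuousLinearMap.comp_apply, coe_smul,
    ContinuousLinearMap.comp_smulₛₗ, Real.ringHom_apply, smul_eq_mul, real_smul, imCLM_apply,
    ofRealCLM_apply, one_im, I_im, ofReal_zero, ofReal_one, smul_zero, mul_zero, mul_one, one_mul,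
    add_zero]
  linear_combination (φ z.im * deriv h z / 2) * I_sq

theorem conj_exp_mul_I_mul (r : ℝ) (z : ℂ) :
    starRingEnd ℂ (exp (r * I * z)) = exp (-(r * I * z)) * (Real.exp (-(2 * r * z.im)) : ℂ) := by
  rw [← exp_conj, ofReal_exp, ← exp_add]
  congr 1
  exact Complex.ext (by simp; ring) (by simp)

/-- For `κ ∈ ℤ`, `m > 0`, the function `F(z) = 𝐖_κ(2πm·Im z)·e^{2πimz}` satisfies
`ξ_κ(F)(z) = (2πm)^{1−κ} W_{2−κ}(−2πm y) e^{−2πimz}`, where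
`ξ_κ = 2i y^κ conj((1/2)(∂/∂x + i ∂/∂y))`. -/
theorem xi_bW_qm (κ m : ℤ) (hm : 0 < m) (F : ℂ → ℂ)
    (hF : ∀ z : ℂ, F z =
      (bWfun κ (2 * Real.pi * m * z.im) : ℂ) * Complex.exp (2 * Real.pi * Complex.I * m * z))
    (z : ℂ) (hz : 0 < z.im) :
    2 * Complex.I * (z.im : ℂ) ^ κ *
        (starRingEnd ℂ) ((1 / 2) * (fderiv ℝ F z 1 + Complex.I * fderiv ℝ F z Complex.I)) =
      (((2 * Real.pi * m) ^ (1 - κ) : ℝ) : ℂ) * (Wfun (2 - κ) (-(2 * Real.pi * m * z.im)) : ℂ) *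
        Complex.exp (-2 * Real.pi * Complex.I * m * z) := by
  set c : ℝ := 2 * Real.pi * m
  have hc : 0 < c := by positivity
  obtain ⟨φ', hφ, hscale⟩ : ∃ φ', HasDerivAt (fun v => bWfun κ (c * v)) φ' z.im ∧
      z.im ^ κ * φ' * Real.exp (-(2 * c * z.im)) = c ^ (1 - κ) * Wfun (2 - κ) (-(c * z.im)) := by
    refine ⟨_, (hasDerivAt_bWfun κ (mul_pos hc hz)).comp z.im
      (by simpa using (hasDerivAt_id z.im).const_mul c), ?_⟩
    have hy : z.im ≠ 0 := hz.ne'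
    rw [mul_zpow, zpow_sub₀ hc.ne', zpow_one, zpow_neg, zpow_neg,
      show -(2 * c * z.im) = -(2 * (c * z.im)) by ring, Real.exp_neg]
    field_simp
  rw [dbar_ofReal_comp_im_mul (φ := fun v => bWfun κ (c * v)) hF hφ (by fun_prop),
    show 2 * Real.pi * I * m * z = c * I * z by push_cast [c]; ring, map_mul, conj_exp_mul_I_mul,
    show -2 * Real.pi * I * m * z = -(c * I * z) by push_cast [c]; ring]
  simp only [map_mul, map_div₀, conj_I, conj_ofReal, map_ofNat]
  generalize Real.exp (-(2 * c * z.im)) = E at hscale ⊢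
  have h := congrArg ((↑) : ℝ → ℂ) hscale
  push_cast at h ⊢
  linear_combination exp (-(c * I * z)) * h - ((z.im : ℂ) ^ κ * φ' * E * exp (-(c * I * z))) * I_sq
end

section
/- Fix κ ∈ ℤ. As w → −∞ one has W_κ(w) = (−2w)^{−κ} e^{2w} + O(|w|^{−κ−1} e^{2w}), where W_κ(w) := (−2w)^{1−κ} ∫₁^∞ e^{2wt} t^{−κ} dt. Equivalently, the function w ↦ (W_κ(w) − (−2w)^{−κ} e^{2w}) · |w|^{κ+1} e^{−2w} is bounded on some interval (−∞, −M]. -/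
/-!
Put `b = 2w` and `n = |κ|`. Subtracting `(−2w)^{−κ} e^{2w} = (−2w)^{1−κ} ∫₁^∞ e^{bt} dt` gives
`W_κ(w) − (−2w)^{−κ} e^{2w} = (−2w)^{1−κ} ∫₁^∞ e^{bt} (t^{−κ} − 1) dt`, and for `t ≥ 1`
`|t^{−κ} − 1| ≤ t^n − 1 ≤ e^{n(t−1)} − 1`. This majorant integrates exactly to
`n e^b / (b (b + n))`, which is `O(e^{2w} / w²)` as soon as `−b ≥ 2n`.
-/

open MeasureTheory
open Set Real

lemma abs_zpow_sub_one_le_pow_natAbs_sub_one (m : ℤ) {t : ℝ} (ht : 1 ≤ t) :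
    |t ^ m - 1| ≤ t ^ m.natAbs - 1 := by
  obtain ⟨n, rfl | rfl⟩ := Int.eq_nat_or_neg m
  · rw [Int.natAbs_natCast, zpow_natCast, abs_of_nonneg (by linarith [one_le_pow₀ (n := n) ht])]
  · have hpow : 1 ≤ t ^ n := one_le_pow₀ ht
    rw [Int.natAbs_neg, Int.natAbs_natCast, zpow_neg, zpow_natCast, abs_sub_comm,
      abs_of_nonneg (by simp [inv_le_one_of_one_le₀ hpow])]
    have : (t ^ n)⁻¹ * t ^ n = 1 := inv_mul_cancel₀ (by positivity)
    nlinarith [inv_pos.2 (show 0 < t ^ n by positivity)]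

lemma pow_le_exp_mul_sub_one (n : ℕ) {t : ℝ} (ht : 0 ≤ t) : t ^ n ≤ exp (n * (t - 1)) := by
  rw [exp_nat_mul]
  exact pow_le_pow_left₀ ht (by linarith [add_one_le_exp (t - 1)]) n

lemma abs_zpow_sub_one_le_exp (m : ℤ) {t : ℝ} (ht : 1 ≤ t) :
    |t ^ m - 1| ≤ exp (m.natAbs * (t - 1)) - 1 :=
  (abs_zpow_sub_one_le_pow_natAbs_sub_one m ht).trans
    (by linarith [pow_le_exp_mul_sub_one m.natAbs (zero_le_one.trans ht)])

lemma integral_exp_mul_Ioi_one {b : ℝ} (hb : b < 0) :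
    ∫ t in Ioi (1 : ℝ), exp (b * t) = -exp b / b := by
  simpa using integral_exp_mul_Ioi hb 1

lemma exp_mul_mul_exp_sub_one (b n t : ℝ) :
    exp (b * t) * (exp (n * (t - 1)) - 1) = exp (-n) * exp ((b + n) * t) - exp (b * t) := by
  rw [mul_sub, mul_one, ← exp_add, ← exp_add]; ring_nf

lemma integral_exp_mul_mul_exp_sub_one {b : ℝ} (n : ℕ) (hb : b + n < 0) :
    ∫ t in Ioi (1 : ℝ), exp (b * t) * (exp (n * (t - 1)) - 1) = n * exp b / (b * (b + n)) := by
  have hb' : b < 0 := by linarith [(Nat.cast_nonneg n : (0:ℝ) ≤ n)]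
  simp_rw [exp_mul_mul_exp_sub_one]
  rw [integral_sub ((integrableOn_exp_mul_Ioi hb 1).const_mul _)
    (integrableOn_exp_mul_Ioi hb' 1), integral_const_mul, integral_exp_mul_Ioi_one hb,
    integral_exp_mul_Ioi_one hb']
  have hexp : exp (-n) * exp (b + n) = exp b := by rw [← exp_add]; ring_nf
  have hbn : b + n ≠ 0 := hb.ne
  have hb0 : b ≠ 0 := hb'.ne
  field_simp
  linear_combination (-b) * hexp

lemma integrableOn_exp_mul_mul_exp_sub_one {b : ℝ} (n : ℕ) (hb : b + n < 0) :
    IntegrableOn (fun t => exp (b * t) * (exp (n * (t - 1)) - 1)) (Ioi 1) := by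
  have hb' : b < 0 := by linarith [(Nat.cast_nonneg n : (0:ℝ) ≤ n)]
  simp_rw [exp_mul_mul_exp_sub_one]
  exact ((integrableOn_exp_mul_Ioi hb 1).const_mul _).sub (integrableOn_exp_mul_Ioi hb' 1)

lemma norm_exp_mul_mul_zpow_sub_one_le (b : ℝ) (m : ℤ) {t : ℝ} (ht : 1 ≤ t) :
    ‖exp (b * t) * (t ^ m - 1)‖ ≤ exp (b * t) * (exp (m.natAbs * (t - 1)) - 1) := by
  rw [norm_mul, norm_of_nonneg (exp_pos _).le, Real.norm_eq_abs]
  exact mul_le_mul_of_nonneg_left (abs_zpow_sub_one_le_exp m ht) (exp_pos _).le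

lemma integrableOn_exp_mul_mul_zpow_sub_one {b : ℝ} (m : ℤ) (hb : b + m.natAbs < 0) :
    IntegrableOn (fun t => exp (b * t) * (t ^ m - 1)) (Ioi 1) := by
  refine (integrableOn_exp_mul_mul_exp_sub_one m.natAbs hb).mono'
    (by fun_prop : Measurable _).aestronglyMeasurable ?_
  filter_upwards [ae_restrict_mem measurableSet_Ioi] with t ht
  exact norm_exp_mul_mul_zpow_sub_one_le b m ht.le

lemma abs_integral_exp_mul_zpow_sub_le {b : ℝ} (m : ℤ) (hb : b + m.natAbs < 0) :
    |(∫ t in Ioi (1 : ℝ), exp (b * t) * t ^ m) - -exp b / b|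
      ≤ m.natAbs * exp b / (b * (b + m.natAbs)) := by
  have hb' : b < 0 := by linarith [(Nat.cast_nonneg m.natAbs : (0:ℝ) ≤ m.natAbs)]
  have hdiff := integrableOn_exp_mul_mul_zpow_sub_one m hb
  have hexp := integrableOn_exp_mul_Ioi hb' 1
  have hsplit : (fun t => exp (b * t) * t ^ m) =
      fun t => exp (b * t) * (t ^ m - 1) + exp (b * t) := by
    funext t; ring
  rw [← integral_exp_mul_Ioi_one hb', hsplit, integral_add hdiff hexp, add_sub_cancel_right,
    ← integral_exp_mul_mul_exp_sub_one m.natAbs hb, ← Real.norm_eq_abs]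
  refine norm_integral_le_of_norm_le (integrableOn_exp_mul_mul_exp_sub_one m.natAbs hb) ?_
  filter_upwards [ae_restrict_mem measurableSet_Ioi] with t ht
  exact norm_exp_mul_mul_zpow_sub_one_le b m ht.le

lemma Wfun_sub_eq (κ : ℤ) {w : ℝ} (hw : w ≠ 0) :
    Wfun κ w - (-2 * w) ^ (-κ) * exp (2 * w) = (-2 * w) ^ (1 - κ) *
      ((∫ t in Ioi (1 : ℝ), exp (2 * w * t) * t ^ (-κ)) - -exp (2 * w) / (2 * w)) := by
  have hx : -2 * w ≠ 0 := by simpa using hw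
  rw [Wfun, mul_sub, sub_eq_neg_add (1 : ℤ), zpow_add_one₀ hx]
  field_simp

lemma zpow_one_sub_mul_half_zpow_add_one (κ : ℤ) {x : ℝ} (hx : 0 < x) :
    x ^ (1 - κ) * (x / 2) ^ (κ + 1) = x ^ 2 / 2 ^ (κ + 1) := by
  rw [div_zpow, mul_div_assoc', ← zpow_add₀ hx.ne', show 1 - κ + (κ + 1) = 2 by ring,
    zpow_two, sq]

lemma abs_zpow_mul_mul_half_zpow_mul_exp_le (κ : ℤ) (n : ℕ) {x D : ℝ} (hx : 2 * n < x)
    (hD : |D| ≤ n * exp (-x) / (-x * (-x + n))) :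
    |x ^ (1 - κ) * D * (x / 2) ^ (κ + 1) * exp x| ≤ 2 * n / 2 ^ (κ + 1) := by
  have hn0 : (0 : ℝ) ≤ n := n.cast_nonneg
  have hx0 : 0 < x := by linarith
  calc |x ^ (1 - κ) * D * (x / 2) ^ (κ + 1) * exp x|
      = x ^ 2 / 2 ^ (κ + 1) * exp x * |D| := by
        rw [← zpow_one_sub_mul_half_zpow_add_one κ hx0, abs_mul, abs_mul, abs_mul,
          abs_of_pos (zpow_pos hx0 _), abs_of_pos (zpow_pos (half_pos hx0) _),
          abs_of_pos (exp_pos x)]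
        ring
    _ ≤ x ^ 2 / 2 ^ (κ + 1) * exp x * (n * exp (-x) / (-x * (-x + n))) := by gcongr
    _ = n * x / (x - n) / 2 ^ (κ + 1) := by
        have : x - n ≠ 0 := by linarith
        have : -x + n ≠ 0 := by linarith
        rw [exp_neg]
        field_simp
        ring
    _ ≤ 2 * n / 2 ^ (κ + 1) := by
        gcongr
        rw [div_le_iff₀ (by linarith)]
        nlinarith

/-- As `w → −∞`, `W_κ(w) = (−2w)^{−κ} e^{2w} + O(|w|^{−κ−1} e^{2w})`: the function
`w ↦ (W_κ(w) − (−2w)^{−κ} e^{2w})·|w|^{κ+1}·e^{−2w}` is bounded on some `(−∞, −M]`. -/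
theorem W_asymptotic (κ : ℤ) :
    ∃ M C : ℝ, 0 < M ∧ ∀ w : ℝ, w ≤ -M →
      |(Wfun κ w - (-2 * w) ^ (-κ) * Real.exp (2 * w)) * |w| ^ (κ + 1) * Real.exp (-2 * w)| ≤ C := by
  set n : ℕ := κ.natAbs
  refine ⟨n + 1, 2 * n / 2 ^ (κ + 1), by positivity, fun w hw => ?_⟩
  have hD := abs_integral_exp_mul_zpow_sub_le (b := 2 * w) (-κ)
    (by rw [Int.natAbs_neg]; linarith)
  rw [Int.natAbs_neg, show 2 * w = -(-2 * w) by ring] at hD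
  rw [Wfun_sub_eq κ (by linarith), abs_of_neg (by linarith : w < 0),
    show -w = -2 * w / 2 by ring, show 2 * w = -(-2 * w) by ring]
  exact abs_zpow_mul_mul_half_zpow_mul_exp_le κ n (by linarith) hD
end

section
/- Fix κ ∈ ℤ. As w → +∞ one has 𝐖_κ(w) = −2^{κ−2} w^{−1} + O(w^{−2}), i.e. the function w ↦ (𝐖_κ(w) + 2^{κ−2}/w) · w² is bounded on some interval [M, ∞). -/
open MeasureTheory

/-!
The substitution `s = 1 + u` gives
`W_{2-κ}(-t) t^{-κ} e^{2t} = 2^{κ-1} t^{-1} ∫₀^∞ e^{-2tu} (1+u)^{κ-2} du`.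
Since `|(1+u)^m - 1| ≤ |m| u e^{|m| u}`, this Laplace transform is `1/(2t) + O(t^{-2})`, so the
integrand of `𝐖_κ` is `2^{κ-2} t^{-2} + O(t^{-3})`, and integrating over `(w, ∞)` gives the
expansion with error `O(w^{-2})`.
-/

open Set Real

lemma abs_exp_sub_one_le_mul_exp_abs (x : ℝ) : |exp x - 1| ≤ |x| * exp |x| := by
  rcases le_total 0 x with hx | hx
  · have h : exp x * exp (-x) = 1 := by rw [← exp_add, add_neg_cancel, exp_zero]
    rw [abs_of_nonneg hx, abs_of_nonneg (sub_nonneg.2 (one_le_exp hx))]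
    nlinarith [one_sub_le_exp_neg x, exp_pos x]
  · rw [abs_of_nonpos hx, abs_of_nonpos (sub_nonpos.2 (exp_le_one_iff.2 hx))]
    nlinarith [add_one_le_exp x, one_le_exp (neg_nonneg.2 hx)]

lemma abs_one_add_zpow_sub_one_le (m : ℤ) {u : ℝ} (hu : 0 ≤ u) :
    |(1 + u) ^ m - 1| ≤ |(m : ℝ)| * u * exp (|(m : ℝ)| * u) := by
  have hpos : 0 < 1 + u := by linarith
  have hlog : |log (1 + u) * m| ≤ |(m : ℝ)| * u := by
    rw [abs_mul, abs_of_nonneg (log_nonneg (by linarith)), mul_comm]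
    gcongr
    linarith [log_le_sub_one_of_pos hpos]
  rw [← rpow_intCast, rpow_def_of_pos hpos]
  calc |exp (log (1 + u) * m) - 1| ≤ |log (1 + u) * m| * exp |log (1 + u) * m| :=
        abs_exp_sub_one_le_mul_exp_abs _
    _ ≤ |(m : ℝ)| * u * exp (|(m : ℝ)| * u) := by gcongr

lemma integral_mul_exp_neg_mul_Ioi {a : ℝ} (ha : 0 < a) :
    ∫ u in Ioi (0 : ℝ), u * exp (-(a * u)) = (a ^ 2)⁻¹ := by
  have h := integral_rpow_mul_exp_neg_mul_Ioi two_pos ha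
  rw [Gamma_two, mul_one, one_div, inv_rpow ha.le, rpow_two] at h
  rw [← h]
  refine setIntegral_congr_fun measurableSet_Ioi fun u _ => ?_
  norm_num

lemma integrableOn_mul_exp_neg_mul_Ioi {a : ℝ} (ha : 0 < a) :
    IntegrableOn (fun u => u * exp (-(a * u))) (Ioi 0) :=
  Integrable.of_integral_ne_zero (by rw [integral_mul_exp_neg_mul_Ioi ha]; positivity)

lemma integral_exp_neg_mul_Ioi_zero {c : ℝ} (hc : 0 < c) :
    ∫ u in Ioi (0 : ℝ), exp (-(c * u)) = c⁻¹ := by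
  have h := integral_exp_mul_Ioi (neg_neg_of_pos hc) 0
  simp only [neg_mul, mul_zero, exp_zero] at h
  rw [h]; ring

lemma abs_integral_exp_neg_mul_one_add_zpow_sub_inv_le (m : ℤ) {c : ℝ} (hc : |(m : ℝ)| < c) :
    |(∫ u in Ioi 0, exp (-(c * u)) * (1 + u) ^ m) - c⁻¹| ≤ |(m : ℝ)| / (c - |(m : ℝ)|) ^ 2 := by
  set k := |(m : ℝ)|
  have hc0 : 0 < c := (abs_nonneg _).trans_lt hc
  have hbound : ∀ u ∈ Ioi (0 : ℝ),
      ‖exp (-(c * u)) * ((1 + u) ^ m - 1)‖ ≤ k * (u * exp (-((c - k) * u))) := by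
    intro u hu
    rw [norm_mul, norm_of_nonneg (exp_pos _).le, Real.norm_eq_abs]
    calc exp (-(c * u)) * |(1 + u) ^ m - 1| ≤ exp (-(c * u)) * (k * u * exp (k * u)) := by
          gcongr; exact abs_one_add_zpow_sub_one_le m (le_of_lt hu)
      _ = k * (u * exp (-((c - k) * u))) := by
          rw [show -((c - k) * u) = -(c * u) + k * u by ring, exp_add]; ring
  have hdom : IntegrableOn (fun u => k * (u * exp (-((c - k) * u)))) (Ioi 0) :=
    (integrableOn_mul_exp_neg_mul_Ioi (sub_pos.2 hc)).const_mul k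
  have hdiff : IntegrableOn (fun u => exp (-(c * u)) * ((1 + u) ^ m - 1)) (Ioi 0) :=
    hdom.mono' (by fun_prop) (ae_restrict_of_forall_mem measurableSet_Ioi hbound)
  have hexp : IntegrableOn (fun u => exp (-(c * u))) (Ioi 0) := by
    simpa only [neg_mul] using exp_neg_integrableOn_Ioi 0 hc0
  have hsplit : (∫ u in Ioi 0, exp (-(c * u)) * (1 + u) ^ m) - c⁻¹ =
      ∫ u in Ioi 0, exp (-(c * u)) * ((1 + u) ^ m - 1) := by
    have hint : IntegrableOn (fun u => exp (-(c * u)) * (1 + u) ^ m) (Ioi 0) :=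
      (hdiff.add hexp).congr_fun (fun u _ => by simp only [Pi.add_apply]; ring) measurableSet_Ioi
    rw [← integral_exp_neg_mul_Ioi_zero hc0, ← integral_sub hint hexp]
    simp only [mul_sub, mul_one]
  rw [hsplit, ← Real.norm_eq_abs]
  calc _ ≤ ∫ u in Ioi 0, k * (u * exp (-((c - k) * u))) :=
        norm_integral_le_of_norm_le hdom (ae_restrict_of_forall_mem measurableSet_Ioi hbound)
    _ = k / (c - k) ^ 2 := by
        rw [integral_const_mul, integral_mul_exp_neg_mul_Ioi (sub_pos.2 hc), div_eq_mul_inv]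

lemma setIntegral_Ioi_eq_integral_Ioi_zero_add {E : Type*} [NormedAddCommGroup E]
    [NormedSpace ℝ E] (f : ℝ → E) (a : ℝ) :
    ∫ s in Ioi a, f s = ∫ u in Ioi 0, f (a + u) := by
  have h := (measurePreserving_add_left volume a).setIntegral_preimage_emb
    (measurableEmbedding_addLeft a) f (Ioi a)
  rwa [preimage_const_add_Ioi, sub_self, eq_comm] at h

lemma Wfun_neg (κ : ℤ) (t : ℝ) :
    Wfun κ (-t) = (2 * t) ^ (1 - κ) * exp (-(2 * t)) *
      ∫ u in Ioi 0, exp (-(2 * t * u)) * (1 + u) ^ (-κ) := by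
  have hintegrand : ∀ u : ℝ, exp (2 * -t * (1 + u)) * (1 + u) ^ (-κ) =
      exp (-(2 * t)) * (exp (-(2 * t * u)) * (1 + u) ^ (-κ)) := fun u => by
    rw [← mul_assoc, ← exp_add]; ring_nf
  rw [Wfun, setIntegral_Ioi_eq_integral_Ioi_zero_add, neg_mul_neg]
  simp_rw [hintegrand, integral_const_mul, mul_assoc]

lemma measurable_Wfun (κ : ℤ) : Measurable (Wfun κ) := by
  have hint : StronglyMeasurable fun w : ℝ => ∫ t in Ioi (1 : ℝ), exp (2 * w * t) * t ^ (-κ) :=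
    StronglyMeasurable.integral_prod_right
      (f := fun w t : ℝ => exp (2 * w * t) * t ^ (-κ)) (by fun_prop)
  exact (by fun_prop : Measurable fun w : ℝ => (-2 * w) ^ (1 - κ)).mul hint.measurable

lemma integral_Ioi_inv_pow_add_two (n : ℕ) {w : ℝ} (hw : 0 < w) :
    ∫ t in Ioi w, (t ^ (n + 2))⁻¹ = ((n + 1) * w ^ (n + 1))⁻¹ := by
  have h := integral_Ioi_rpow_of_lt (a := -(n + 2 : ℝ)) (by linarith [n.cast_nonneg (α := ℝ)]) hw
  have hcongr : ∀ t ∈ Ioi w, t ^ (-(n + 2 : ℝ)) = (t ^ (n + 2))⁻¹ := fun t ht => by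
    rw [rpow_neg (hw.trans ht).le, ← rpow_natCast]; push_cast; rfl
  rw [setIntegral_congr_fun measurableSet_Ioi hcongr, show -(n + 2 : ℝ) + 1 = -(n + 1) by ring,
    rpow_neg hw.le, show (n : ℝ) + 1 = ((n + 1 : ℕ) : ℝ) by push_cast; ring, rpow_natCast] at h
  rw [h]; push_cast; field_simp

lemma integrableOn_Ioi_inv_pow_add_two (n : ℕ) {w : ℝ} (hw : 0 < w) :
    IntegrableOn (fun t => (t ^ (n + 2))⁻¹) (Ioi w) :=
  Integrable.of_integral_ne_zero (by rw [integral_Ioi_inv_pow_add_two n hw]; positivity)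

lemma abs_setIntegral_Ioi_sub_div_le {f : ℝ → ℝ} {w a b : ℝ} (hw : 0 < w)
    (hf : AEStronglyMeasurable f (volume.restrict (Ioi w)))
    (hfab : ∀ t ∈ Ioi w, |f t - a / t ^ 2| ≤ b / t ^ 3) :
    |(∫ t in Ioi w, f t) - a / w| ≤ b / (2 * w ^ 2) := by
  have h2 : IntegrableOn (fun t => a / t ^ 2) (Ioi w) := by
    simp only [div_eq_mul_inv]; exact (integrableOn_Ioi_inv_pow_add_two 0 hw).const_mul a
  have h3 : IntegrableOn (fun t => b / t ^ 3) (Ioi w) := by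
    simp only [div_eq_mul_inv]; exact (integrableOn_Ioi_inv_pow_add_two 1 hw).const_mul b
  have hbound : ∀ᵐ t ∂volume.restrict (Ioi w), ‖f t - a / t ^ 2‖ ≤ b / t ^ 3 :=
    ae_restrict_of_forall_mem measurableSet_Ioi hfab
  have hdiff : IntegrableOn (fun t => f t - a / t ^ 2) (Ioi w) :=
    h3.mono' (hf.sub h2.aestronglyMeasurable) hbound
  have hf_int : IntegrableOn f (Ioi w) :=
    (hdiff.add h2).congr_fun (fun t _ => sub_add_cancel _ _) measurableSet_Ioi
  have hsplit : (∫ t in Ioi w, f t) - a / w = ∫ t in Ioi w, (f t - a / t ^ 2) := by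
    rw [integral_sub hf_int h2]
    simp only [div_eq_mul_inv, integral_const_mul, integral_Ioi_inv_pow_add_two 0 hw]
    norm_num
  rw [hsplit, ← Real.norm_eq_abs]
  calc _ ≤ ∫ t in Ioi w, b / t ^ 3 := norm_integral_le_of_norm_le h3 hbound
    _ = b / (2 * w ^ 2) := by
        simp only [div_eq_mul_inv, integral_const_mul, integral_Ioi_inv_pow_add_two 1 hw]
        norm_num

lemma abs_Wfun_two_sub_neg_mul_sub_le (κ : ℤ) {t : ℝ} (ht : 0 < t)
    (hκt : |((κ - 2 : ℤ) : ℝ)| ≤ t) :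
    |Wfun (2 - κ) (-t) * t ^ (-κ) * exp (2 * t) - 2 ^ (κ - 2) / t ^ 2| ≤
      2 ^ (κ - 1) * |((κ - 2 : ℤ) : ℝ)| / t ^ 3 := by
  set k := |((κ - 2 : ℤ) : ℝ)|
  set L := ∫ u in Ioi 0, exp (-(2 * t * u)) * (1 + u) ^ (κ - 2) with hL_def
  have hL : |L - (2 * t)⁻¹| ≤ k / (2 * t - k) ^ 2 :=
    abs_integral_exp_neg_mul_one_add_zpow_sub_inv_le (κ - 2) (by linarith)
  have hid : Wfun (2 - κ) (-t) * t ^ (-κ) * exp (2 * t) - 2 ^ (κ - 2) / t ^ 2 =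
      2 ^ (κ - 1) / t * (L - (2 * t)⁻¹) := by
    rw [Wfun_neg, show 1 - (2 - κ) = κ - 1 by ring, show -(2 - κ) = κ - 2 by ring, ← hL_def,
      mul_zpow, show κ - 2 = κ - 1 - 1 by ring, zpow_sub_one₀ two_ne_zero (κ - 1),
      zpow_sub_one₀ ht.ne' κ, zpow_neg, exp_neg]
    field_simp
  rw [hid, abs_mul, abs_of_pos (by positivity)]
  calc 2 ^ (κ - 1) / t * |L - (2 * t)⁻¹| ≤ 2 ^ (κ - 1) / t * (k / (2 * t - k) ^ 2) := by gcongr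
    _ ≤ 2 ^ (κ - 1) / t * (k / t ^ 2) := by gcongr; linarith
    _ = 2 ^ (κ - 1) * k / t ^ 3 := by field_simp

/-- As `w → +∞`, `𝐖_κ(w) = −2^{κ−2} w^{−1} + O(w^{−2})`: the function
`w ↦ (𝐖_κ(w) + 2^{κ−2}/w)·w²` is bounded on some `[M, ∞)`. -/
theorem bW_asymptotic (κ : ℤ) :
    ∃ M C : ℝ, 0 < M ∧ ∀ w : ℝ, M ≤ w →
      |(bWfun κ w + (2 : ℝ) ^ (κ - 2) / w) * w ^ 2| ≤ C := by
  set k := |((κ - 2 : ℤ) : ℝ)|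
  refine ⟨max 1 k, 2 ^ (κ - 2) * k, by positivity, fun w hw => ?_⟩
  have hw0 : 0 < w := one_pos.trans_le (le_of_max_le_left hw)
  have hmeas : Measurable fun t => Wfun (2 - κ) (-t) * t ^ (-κ) * exp (2 * t) := by
    have := measurable_Wfun (2 - κ); fun_prop
  have hF := abs_setIntegral_Ioi_sub_div_le hw0 hmeas.aestronglyMeasurable fun t ht =>
    abs_Wfun_two_sub_neg_mul_sub_le κ (hw0.trans ht) ((le_of_max_le_right hw).trans ht.le)
  rw [bWfun, neg_add_eq_sub, abs_mul, abs_sub_comm, abs_of_nonneg (sq_nonneg w)]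
  calc _ ≤ 2 ^ (κ - 1) * k / (2 * w ^ 2) * w ^ 2 := by gcongr
    _ = 2 ^ (κ - 2) * k := by
        rw [show κ - 1 = κ - 2 + 1 by ring, zpow_add_one₀ two_ne_zero]; field_simp
end

section
/- Let ζ ∈ ℍ, let κ, m ∈ ℤ, and let g : (0,1) → ℝ be differentiable. Define f : {z ∈ ℍ : z ≠ ζ} → ℂ by f(z) := ((z−ζ̄)/(2√(Im ζ)))^{−κ} · g(r_ζ(z)) · X_ζ(z)^m, where X_ζ(z) := (z−ζ)/(z−ζ̄) and r_ζ(z) := |X_ζ(z)|. Then for every z = x+iy ∈ ℍ with z ≠ ζ one has 2i y^κ · conj( (1/2)(∂f/∂x + i ∂f/∂y)(z) ) = −(1/2)·((z−ζ̄)/(2√(Im ζ)))^{κ−2} · (1−r_ζ(z)²)^κ · r_ζ(z)^{2m+1} · g′(r_ζ(z)) · X_ζ(z)^{−m−1}. -/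
open Complex

/-- `X_ζ(z) := (z−ζ̄)/(z−ζ̄)` elliptic coordinate. -/
noncomputable def Xell (ζ z : ℂ) : ℂ := (z - ζ) / (z - (starRingEnd ℂ) ζ)

/-- `r_ζ(z) := |X_ζ(z)|`. -/
noncomputable def rell (ζ z : ℂ) : ℝ := ‖Xell ζ z‖

/-!
Write `f = A^{-κ} · G · X^m` with `A(z) = (z − ζ̄)/(2√(Im ζ))` and `X = X_ζ` holomorphic and
`G = g ∘ |X|` real-valued. The Wirtinger derivative `∂/∂z̄` is a derivation that kills holomorphic
factors, so only `G` contributes, and `∂G/∂z̄ = g′(r) X conj(X′) / (2r)` because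
`|X|² = X · conj X`. The closed form follows from `X′ = i / (2A²)`, `conj X = r² X⁻¹` and
`Im z = (1 − r²) |A|²`, the last being `|z − ζ̄|² − |z − ζ|² = 4 Im z Im ζ`.
-/

open ComplexConjugate

/-- The Wirtinger derivative `∂/∂z̄` of a function whose real derivative is `L`. -/
noncomputable def dbar : (ℂ →L[ℝ] ℂ) →ₗ[ℂ] ℂ where
  toFun L := 1 / 2 * (L 1 + I * L I)
  map_add' L M := by simp only [add_apply]; ring
  map_smul' c L := by simp only [smul_apply, smul_eq_mul, RingHom.id_apply]; ring

def HasDbarAt (f : ℂ → ℂ) (a z : ℂ) : Prop := ∃ L, HasFDerivAt f L z ∧ dbar L = a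

theorem HasDbarAt.dbar_fderiv {f : ℂ → ℂ} {a z : ℂ} (h : HasDbarAt f a z) :
    dbar (fderiv ℝ f z) = a := by
  obtain ⟨L, hL, rfl⟩ := h
  rw [hL.fderiv]

theorem dbar_restrictScalars (L : ℂ →L[ℂ] ℂ) : dbar (L.restrictScalars ℝ) = 0 := by
  have : L I = I * L 1 := by simpa using L.map_smul I 1
  simp [dbar, this, ← mul_assoc]

theorem DifferentiableAt.hasDbarAt_zero {f : ℂ → ℂ} {z : ℂ} (h : DifferentiableAt ℂ f z) :
    HasDbarAt f 0 z :=
  ⟨_, h.hasFDerivAt.restrictScalars ℝ, dbar_restrictScalars _⟩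

theorem HasDbarAt.mul {f g : ℂ → ℂ} {a b z : ℂ} (hf : HasDbarAt f a z) (hg : HasDbarAt g b z) :
    HasDbarAt (fun w => f w * g w) (f z * b + g z * a) z := by
  obtain ⟨L, hL, rfl⟩ := hf
  obtain ⟨M, hM, rfl⟩ := hg
  exact ⟨_, hL.mul hM, by simp⟩

theorem HasFDerivAt.hasDbarAt_ofReal {u : ℂ → ℝ} {ℓ : ℂ →L[ℝ] ℝ} {z : ℂ} (h : HasFDerivAt u ℓ z) :
    HasDbarAt (fun w => (u w : ℂ)) (1 / 2 * (ℓ 1 + I * ℓ I)) z :=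
  ⟨_, ofRealCLM.hasFDerivAt.comp z h, by simp [dbar]⟩

theorem ofReal_inner_add_I_mul_inner_I_mul (x d : ℂ) :
    (inner ℝ x d : ℂ) + I * inner ℝ x (I * d) = x * conj d := by
  apply Complex.ext <;> simp [Complex.inner] <;> ring

theorem hasDbarAt_ofReal_comp_norm {X : ℂ → ℂ} {g : ℝ → ℝ} {d z : ℂ} {g' : ℝ}
    (hX : HasDerivAt X d z) (hX0 : X z ≠ 0) (hg : HasDerivAt g g' ‖X z‖) :
    HasDbarAt (fun w => (g ‖X w‖ : ℂ)) (g' * X z * conj d / (2 * ‖X z‖)) z := by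
  have hr : 0 < ‖X z‖ := norm_pos_iff.2 hX0
  have hsqrt : HasDerivAt (fun t => g √t) (g' / (2 * ‖X z‖)) (‖X z‖ ^ 2) := by
    rw [← Real.sqrt_sq hr.le] at hg
    have := hg.comp _ (Real.hasDerivAt_sqrt (by positivity))
    rw [Real.sqrt_sq hr.le, ← div_eq_mul_one_div] at this
    exact this
  have h := (hsqrt.comp_hasFDerivAt z (hX.hasFDerivAt.restrictScalars ℝ).norm_sq).hasDbarAt_ofReal
  simp only [Function.comp_def, Real.sqrt_sq (norm_nonneg _)] at h
  convert h using 1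
  simp only [smul_apply, ContinuousLinearMap.comp_apply, innerSL_apply_apply,
    ContinuousLinearMap.coe_restrictScalars', ContinuousLinearMap.toSpanSingleton_apply,
    smul_eq_mul, nsmul_eq_mul]
  rw [mul_assoc (g' : ℂ), ← ofReal_inner_add_I_mul_inner_I_mul]
  have hr' : (‖X z‖ : ℂ) ≠ 0 := by exact_mod_cast hr.ne'
  push_cast
  field_simp

theorem conj_eq_norm_sq_mul_inv (x : ℂ) : conj x = ‖x‖ ^ 2 * x⁻¹ := by
  rcases eq_or_ne x 0 with rfl | hx
  · simp
  · rw [← mul_conj', mul_comm x, mul_assoc, mul_inv_cancel₀ hx, mul_one]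

section Elliptic

variable {ζ z : ℂ}

theorem sub_conj_ne_zero (hζ : 0 < ζ.im) (hz : 0 < z.im) : z - conj ζ ≠ 0 := fun h => by
  have := congrArg im h
  simp only [sub_im, conj_im, sub_neg_eq_add, zero_im] at this
  linarith

theorem Xell_ne_zero (hne : z ≠ ζ) (h : z - conj ζ ≠ 0) : Xell ζ z ≠ 0 :=
  div_ne_zero (sub_ne_zero.2 hne) h

theorem one_sub_rell_sq_mul_normSq (h : z - conj ζ ≠ 0) :
    (1 - rell ζ z ^ 2) * normSq (z - conj ζ) = 4 * z.im * ζ.im := by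
  rw [rell, Xell, ← normSq_eq_norm_sq, normSq_div, sub_mul, one_mul,
    div_mul_cancel₀ _ (normSq_pos.2 h).ne']
  simp only [normSq_apply, sub_re, sub_im, conj_re, conj_im]
  ring

theorem rell_lt_one (hζ : 0 < ζ.im) (hz : 0 < z.im) : rell ζ z < 1 := by
  have h := one_sub_rell_sq_mul_normSq (sub_conj_ne_zero hζ hz)
  have hpos : 0 < (1 - rell ζ z ^ 2) * normSq (z - conj ζ) := by rw [h]; positivity
  have : 0 < 1 - rell ζ z ^ 2 := pos_of_mul_pos_left hpos (normSq_nonneg _)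
  have : 0 ≤ rell ζ z := norm_nonneg _
  nlinarith

theorem im_eq_one_sub_rell_sq_mul (hζ : 0 < ζ.im) (hz : 0 < z.im) :
    (z.im : ℂ) = (1 - rell ζ z ^ 2 : ℝ) *
      ((z - conj ζ) / (2 * √ζ.im) * conj ((z - conj ζ) / (2 * √ζ.im))) := by
  have h := one_sub_rell_sq_mul_normSq (sub_conj_ne_zero hζ hz)
  rw [mul_conj, normSq_div, ← ofReal_mul, ofReal_inj, normSq_mul, normSq_ofReal,
    Real.mul_self_sqrt hζ.le, normSq_ofNat]
  field_simp
  linarith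

theorem hasDerivAt_Xell (hζ : 0 < ζ.im) (h : z - conj ζ ≠ 0) :
    HasDerivAt (Xell ζ) (I / (2 * ((z - conj ζ) / (2 * √ζ.im)) ^ 2)) z := by
  refine (((hasDerivAt_id z).sub_const ζ).div ((hasDerivAt_id z).sub_const (conj ζ)) h).congr_deriv ?_
  have hsqrt : (√ζ.im : ℂ) ^ 2 = ζ.im := by rw [← ofReal_pow, Real.sq_sqrt hζ.le]
  simp only [id, one_mul, mul_one, sub_sub_sub_cancel_left, sub_conj]
  field_simp
  rw [hsqrt]
  push_cast
  ring

theorem conj_Xell : conj (Xell ζ z) = rell ζ z ^ 2 * (Xell ζ z)⁻¹ :=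
  conj_eq_norm_sq_mul_inv _

end Elliptic

/-- Lemma 5.2 (1): for `f(z) = ((z−ζ̄)/(2√Im ζ))^{−κ} g(r_ζ(z)) X_ζ(z)^m` with `g`
differentiable on `(0,1)`, one has
`ξ_κ(f)(z) = −(1/2)((z−ζ̄)/(2√Im ζ))^{κ−2} (1−r_ζ(z)²)^κ r_ζ(z)^{2m+1} g′(r_ζ(z)) X_ζ(z)^{−m−1}`,
where `ξ_κ = 2i y^κ conj((1/2)(∂/∂x + i ∂/∂y))`. -/
theorem xi_elliptic (ζ : ℂ) (hζ : 0 < ζ.im) (κ m : ℤ) (g g' : ℝ → ℝ)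
    (hg : ∀ r ∈ Set.Ioo (0 : ℝ) 1, HasDerivAt g (g' r) r)
    (f : ℂ → ℂ)
    (hf : ∀ z : ℂ, f z = ((z - (starRingEnd ℂ) ζ) / (2 * (Real.sqrt ζ.im : ℂ))) ^ (-κ) *
      (g (rell ζ z) : ℂ) * Xell ζ z ^ m)
    (z : ℂ) (hz : 0 < z.im) (hne : z ≠ ζ) :
    2 * Complex.I * (z.im : ℂ) ^ κ *
        (starRingEnd ℂ) ((1 / 2) * (fderiv ℝ f z 1 + Complex.I * fderiv ℝ f z Complex.I)) =
      -(1 / 2) * ((z - (starRingEnd ℂ) ζ) / (2 * (Real.sqrt ζ.im : ℂ))) ^ (κ - 2) *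
        ((1 - rell ζ z ^ 2 : ℝ) : ℂ) ^ κ * ((rell ζ z : ℝ) : ℂ) ^ (2 * m + 1) *
        (g' (rell ζ z) : ℂ) * Xell ζ z ^ (-m - 1) := by
  have hc := sub_conj_ne_zero hζ hz
  have hX0 := Xell_ne_zero hne hc
  have hr : 0 < rell ζ z := norm_pos_iff.2 hX0
  have hX := hasDerivAt_Xell hζ hc
  set a := (z - conj ζ) / (2 * (√ζ.im : ℂ)) with ha
  have ha0 : a ≠ 0 := div_ne_zero hc (by simpa using (Real.sqrt_pos.2 hζ).ne')
  have hA : DifferentiableAt ℂ (fun w => ((w - conj ζ) / (2 * (√ζ.im : ℂ))) ^ (-κ)) z :=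
    ((differentiableAt_id.sub_const _).div_const _).zpow (.inl ha0)
  have hXm : DifferentiableAt ℂ (fun w => Xell ζ w ^ m) z := hX.differentiableAt.zpow (.inl hX0)
  have hG : HasDbarAt (fun w => (g (rell ζ w) : ℂ))
      (g' (rell ζ z) * Xell ζ z * conj (I / (2 * a ^ 2)) / (2 * rell ζ z)) z :=
    hasDbarAt_ofReal_comp_norm hX hX0 (hg _ ⟨hr, rell_lt_one hζ hz⟩)
  change 2 * I * _ * conj (dbar (fderiv ℝ f z)) = _
  rw [funext hf, ((hA.hasDbarAt_zero.mul hG).mul hXm.hasDbarAt_zero).dbar_fderiv,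
    im_eq_one_sub_rell_sq_mul hζ hz, ← ha]
  simp only [mul_zero, add_zero, zero_add, map_mul, map_div₀, map_zpow₀, conj_conj, map_ofNat,
    conj_ofReal, conj_Xell]
  have hr0 : (rell ζ z : ℂ) ≠ 0 := by exact_mod_cast hr.ne'
  have hb0 : conj a ^ κ ≠ 0 := zpow_ne_zero _ ((map_ne_zero _).2 ha0)
  have hXm0 : Xell ζ z ^ m ≠ 0 := zpow_ne_zero _ hX0
  rw [zpow_sub₀ ha0, zpow_add_one₀ hr0, zpow_mul, zpow_sub_one₀ hX0, zpow_neg, zpow_neg]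
  simp only [mul_zpow, inv_zpow]
  field_simp
  ring_nf
  rw [I_sq]
  ring
end
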